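/- arXiv:2402.14731 — 3 statements merged into one kernel-verified Lean document; each statement's English description precedes it below -/
import Mathlib

section
/- For all integers j ≥ 2 and m ≥ 0 with (j,m) ∉ {(2,0),(3,0)}, the m-th derivative of the Berg function g_j satisfies lim_{t→−1⁺} (1−t²)^{(j−3)/2+m}·g_j^{(m)}(t) = 0 and lim_{t→1⁻} (1−t²)^{(j−3)/2+m}·g_j^{(m)}(t) = −(j−1)·2^{m−2}·Γ((j−3)/2+m)/π^{(j−1)/2}. -/
open Real Set Filter Topology

noncomputable def sphereVol (m : ℕ) : ℝ := 2 * π ^ ((m : ℝ) / 2) / Real.Gamma ((m : ℝ) / 2)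

/-- The Berg functions `g_j`, defined recursively. -/
noncomputable def berg : ℕ → ℝ → ℝ
  | 0 => fun _ => 0
  | 1 => fun _ => 0
  | 2 => fun t => (1 / (2 * π)) * (π - Real.arccos t) * Real.sqrt (1 - t ^ 2) - t / (4 * π)
  | 3 => fun t => (1 / (2 * π)) * (1 + t * Real.log (1 - t) + (4 / 3 - Real.log 2) * t)
  | (j + 4) => fun t =>
      (((j : ℝ) + 3) / (2 * π)) * berg (j + 2) t
        + (((j : ℝ) + 3) / (2 * π * ((j : ℝ) + 1))) * t * deriv (berg (j + 2)) t
        + (((j : ℝ) + 3) / (2 * π * sphereVol (j + 2))) * t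

noncomputable def Lc (j m : ℕ) : ℝ :=
  -(((j : ℝ) - 1) * 2 ^ ((m : ℝ) - 2) * (Real.Gamma (((j : ℝ) - 3) / 2 + m) / π ^ (((j : ℝ) - 1) / 2)))

noncomputable def Sf (j m : ℕ) : ℝ → ℝ :=
  fun t => (1 - t ^ 2) ^ (((j : ℝ) - 3) / 2 + m) * iteratedDeriv m (berg j) t

def Bundle (j : ℕ) : Prop :=
  ContDiffOn ℝ (⊤ : ℕ∞) (berg j) (Ioo (-1) 1) ∧
  (∀ m, Tendsto (fun t => (1 - t ^ 2) * Sf j m t) (𝓝[Ioo (-1:ℝ) 1] (-1)) (𝓝 0) ∧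
        Tendsto (fun t => (1 - t ^ 2) * Sf j m t) (𝓝[Ioo (-1:ℝ) 1] 1) (𝓝 0)) ∧
  (∀ m, ¬((j = 2 ∨ j = 3) ∧ m = 0) →
        Tendsto (Sf j m) (𝓝[Ioo (-1:ℝ) 1] (-1)) (𝓝 0) ∧
        Tendsto (Sf j m) (𝓝[Ioo (-1:ℝ) 1] 1) (𝓝 (Lc j m)))

lemma one_sub_sq_pos {t : ℝ} (ht : t ∈ Ioo (-1:ℝ) 1) : 0 < 1 - t ^ 2 := by
  obtain ⟨h1, h2⟩ := ht; nlinarith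

lemma ev_within {x : ℝ} {f g : ℝ → ℝ} (h : ∀ t ∈ Ioo (-1:ℝ) 1, f t = g t) :
    f =ᶠ[𝓝[Ioo (-1:ℝ) 1] x] g :=
  eventually_nhdsWithin_of_forall h

lemma ev_nhds {x : ℝ} (hx : x ∈ Ioo (-1:ℝ) 1) {f g : ℝ → ℝ} (h : ∀ t ∈ Ioo (-1:ℝ) 1, f t = g t) :
    f =ᶠ[𝓝 x] g :=
  Filter.eventually_of_mem (isOpen_Ioo.mem_nhds hx) h

lemma iterDeriv_congr {m : ℕ} {f F : ℝ → ℝ} (h : ∀ t ∈ Ioo (-1:ℝ) 1, iteratedDeriv m f t = F t)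
    {x : ℝ} (hx : x ∈ Ioo (-1:ℝ) 1) : iteratedDeriv (m+1) f x = deriv F x := by
  rw [iteratedDeriv_succ]
  exact Filter.EventuallyEq.deriv_eq (ev_nhds hx h)

lemma tendsto_one_sub_sq {c : ℝ} (hc : c = 1 ∨ c = -1) :
    Tendsto (fun t : ℝ => 1 - t ^ 2) (𝓝[Ioo (-1:ℝ) 1] c) (𝓝[>] (0:ℝ)) := by
  rw [tendsto_nhdsWithin_iff]
  constructor
  · have h : Tendsto (fun t : ℝ => 1 - t ^ 2) (𝓝 c) (𝓝 (1 - c ^ 2)) :=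
      (continuous_const.sub (continuous_pow 2)).tendsto c
    have h0 : 1 - c ^ 2 = 0 := by rcases hc with h | h <;> simp [h]
    rw [h0] at h
    exact h.mono_left nhdsWithin_le_nhds
  · exact eventually_nhdsWithin_of_forall (fun t ht => one_sub_sq_pos ht)

lemma tendsto_rpow_one_sub_sq {c p : ℝ} (hc : c = 1 ∨ c = -1) (hp : 0 < p) :
    Tendsto (fun t : ℝ => (1 - t ^ 2) ^ p) (𝓝[Ioo (-1:ℝ) 1] c) (𝓝 (0:ℝ)) := by
  have h1 : Tendsto (fun x : ℝ => x ^ p) (𝓝[>] (0:ℝ)) (𝓝 ((0:ℝ) ^ p)) :=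
    ((Real.continuousAt_rpow_const 0 p (Or.inr hp.le)).tendsto).mono_left nhdsWithin_le_nhds
  rw [Real.zero_rpow hp.ne'] at h1
  exact h1.comp (tendsto_one_sub_sq hc)

def ind : ℕ → ℝ → ℝ
  | 0 => fun t => t
  | 1 => fun _ => 1
  | _ => fun _ => 0

lemma ind_hasDeriv (m : ℕ) (t : ℝ) : HasDerivAt (ind m) (ind (m+1) t) t := by
  match m with
  | 0 => simpa [ind] using hasDerivAt_id' t
  | 1 => simpa [ind] using hasDerivAt_const t (1:ℝ)
  | (k+2) => simpa [ind] using hasDerivAt_const t (0:ℝ)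

lemma ind_continuous (m : ℕ) : Continuous (ind m) := by
  match m with
  | 0 => exact continuous_id
  | 1 => exact continuous_const
  | (k+2) => exact continuous_const

lemma iterDerivWithin_eq {f : ℝ → ℝ} {s : Set ℝ} (hs : IsOpen s) (m : ℕ) :
    Set.EqOn (iteratedDerivWithin m f s) (iteratedDeriv m f) s := by
  intro x hx
  rw [iteratedDerivWithin_eq_iteratedFDerivWithin, iteratedDeriv_eq_iteratedFDeriv,
    iteratedFDerivWithin_of_isOpen m hs hx]

lemma diffAt_iteratedDeriv {f : ℝ → ℝ} (hf : ContDiffOn ℝ (⊤ : ℕ∞) f (Ioo (-1:ℝ) 1)) (m : ℕ)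
    {x : ℝ} (hx : x ∈ Ioo (-1:ℝ) 1) : DifferentiableAt ℝ (iteratedDeriv m f) x := by
  have h1 : DifferentiableOn ℝ (iteratedDerivWithin m f (Ioo (-1:ℝ) 1)) (Ioo (-1:ℝ) 1) :=
    hf.differentiableOn_iteratedDerivWithin
      (by exact_mod_cast lt_top_iff_ne_top.2 (ENat.coe_ne_top m)) (uniqueDiffOn_Ioo _ _)
  have h2 : DifferentiableOn ℝ (iteratedDeriv m f) (Ioo (-1:ℝ) 1) :=
    h1.congr (fun y hy => (iterDerivWithin_eq isOpen_Ioo m hy).symm)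
  exact (h2 x hx).differentiableAt (isOpen_Ioo.mem_nhds hx)

lemma hasDerivAt_iteratedDeriv {f : ℝ → ℝ} (hf : ContDiffOn ℝ (⊤ : ℕ∞) f (Ioo (-1:ℝ) 1)) (m : ℕ)
    {x : ℝ} (hx : x ∈ Ioo (-1:ℝ) 1) :
    HasDerivAt (iteratedDeriv m f) (iteratedDeriv (m+1) f x) x := by
  have h := (diffAt_iteratedDeriv hf m hx).hasDerivAt
  rwa [show deriv (iteratedDeriv m f) x = iteratedDeriv (m+1) f x from
    (congrFun iteratedDeriv_succ x).symm] at h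

lemma berg2_smooth : ContDiffOn ℝ (⊤ : ℕ∞) (berg 2) (Ioo (-1:ℝ) 1) := by
  intro t ht
  apply ContDiffAt.contDiffWithinAt
  show ContDiffAt ℝ _ (fun t : ℝ => (1 / (2 * π)) * (π - Real.arccos t) * Real.sqrt (1 - t ^ 2) - t / (4 * π)) t
  have h1 : ContDiffAt ℝ (⊤:ℕ∞) Real.arccos t := Real.contDiffAt_arccos ht.1.ne' ht.2.ne
  have h2 : ContDiffAt ℝ (⊤:ℕ∞) (fun t : ℝ => Real.sqrt (1 - t ^ 2)) t :=
    ((contDiffAt_const (c := (1:ℝ))).sub (contDiffAt_id.pow 2)).sqrt (one_sub_sq_pos ht).ne'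
  exact ((contDiffAt_const.mul (contDiffAt_const.sub h1)).mul h2).sub
    (contDiffAt_id.div_const _)

lemma berg3_smooth : ContDiffOn ℝ (⊤ : ℕ∞) (berg 3) (Ioo (-1:ℝ) 1) := by
  intro t ht
  apply ContDiffAt.contDiffWithinAt
  show ContDiffAt ℝ _ (fun t : ℝ => (1 / (2 * π)) * (1 + t * Real.log (1 - t) + (4 / 3 - Real.log 2) * t)) t
  have h1 : ContDiffAt ℝ (⊤:ℕ∞) (fun t : ℝ => Real.log (1 - t)) t :=
    ((contDiffAt_const (c := (1:ℝ))).sub contDiffAt_id).log (by nlinarith [ht.2] : (1:ℝ) - t ≠ 0)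
  exact contDiffAt_const.mul ((contDiffAt_const.add (contDiffAt_id.mul h1)).add
    (contDiffAt_const.mul contDiffAt_id))

lemma berg_step_smooth (j : ℕ) (hg : ContDiffOn ℝ (⊤ : ℕ∞) (berg (j+2)) (Ioo (-1:ℝ) 1)) :
    ContDiffOn ℝ (⊤ : ℕ∞) (berg (j+4)) (Ioo (-1:ℝ) 1) := by
  have hd : ContDiffOn ℝ (⊤ : ℕ∞) (deriv (berg (j+2))) (Ioo (-1:ℝ) 1) :=
    hg.deriv_of_isOpen isOpen_Ioo (by exact_mod_cast le_refl _)
  show ContDiffOn ℝ _ (fun t => (((j : ℝ) + 3) / (2 * π)) * berg (j + 2) t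
        + (((j : ℝ) + 3) / (2 * π * ((j : ℝ) + 1))) * t * deriv (berg (j + 2)) t
        + (((j : ℝ) + 3) / (2 * π * sphereVol (j + 2))) * t) _
  exact ((contDiffOn_const.mul hg).add
    ((contDiffOn_const.mul contDiffOn_id).mul hd)).add (contDiffOn_const.mul contDiffOn_id)

lemma bergRec (j : ℕ) (hg : ContDiffOn ℝ (⊤ : ℕ∞) (berg (j+2)) (Ioo (-1:ℝ) 1)) (m : ℕ) :
    ∀ t ∈ Ioo (-1:ℝ) 1, iteratedDeriv m (berg (j+4)) t =
      (((j:ℝ)+3)/(2*π)) * iteratedDeriv m (berg (j+2)) t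
      + (((j:ℝ)+3)/(2*π*((j:ℝ)+1))) * (t * iteratedDeriv (m+1) (berg (j+2)) t
          + m * iteratedDeriv m (berg (j+2)) t)
      + (((j:ℝ)+3)/(2*π*sphereVol (j+2))) * ind m t := by
  induction m with
  | zero =>
    intro t ht
    simp only [iteratedDeriv_succ, iteratedDeriv_zero, ind, Nat.cast_zero]
    show (((j:ℝ)+3)/(2*π)) * berg (j+2) t + _ * t * deriv (berg (j+2)) t + _ * t = _
    ring
  | succ m IH =>
    intro t ht
    rw [iterDeriv_congr IH ht]
    have h1 := hasDerivAt_iteratedDeriv hg m ht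
    have h2 := hasDerivAt_iteratedDeriv hg (m+1) ht
    have h3 := ind_hasDeriv m t
    have H : HasDerivAt (fun t => (((j:ℝ)+3)/(2*π)) * iteratedDeriv m (berg (j+2)) t
      + (((j:ℝ)+3)/(2*π*((j:ℝ)+1))) * (t * iteratedDeriv (m+1) (berg (j+2)) t
          + m * iteratedDeriv m (berg (j+2)) t)
      + (((j:ℝ)+3)/(2*π*sphereVol (j+2))) * ind m t)
      ((((j:ℝ)+3)/(2*π)) * iteratedDeriv (m+1) (berg (j+2)) t
      + (((j:ℝ)+3)/(2*π*((j:ℝ)+1))) * ((1 * iteratedDeriv (m+1) (berg (j+2)) t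
          + t * iteratedDeriv (m+2) (berg (j+2)) t)
          + m * iteratedDeriv (m+1) (berg (j+2)) t)
      + (((j:ℝ)+3)/(2*π*sphereVol (j+2))) * ind (m+1) t) t :=
      ((h1.const_mul _).add
        ((((hasDerivAt_id t).mul h2).add (h1.const_mul _)).const_mul _)).add
        (h3.const_mul _)
    rw [H.deriv]
    push_cast
    ring

lemma Lc_step (j m : ℕ) :
    (((j:ℝ)+3)/(2*π*((j:ℝ)+1))) * Lc (j+2) (m+1) = Lc (j+4) m := by
  unfold Lc
  push_cast
  rw [show ((j:ℝ)+2-3)/2 + ((m:ℝ)+1) = ((j:ℝ)+4-3)/2 + m by ring]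
  rw [show ((m:ℝ)+1)-2 = ((m:ℝ)-2)+1 by ring, Real.rpow_add two_pos, Real.rpow_one]
  rw [show ((j:ℝ)+4-1)/2 = (((j:ℝ)+2-1)/2) + 1 by ring, Real.rpow_add pi_pos, Real.rpow_one]
  have h1 : π ≠ 0 := pi_ne_zero
  have h2 : (π:ℝ) ^ (((j:ℝ)+2-1)/2) ≠ 0 := (Real.rpow_pos_of_pos pi_pos _).ne'
  have h3 : (j:ℝ) + 1 ≠ 0 := by positivity
  field_simp
  ring

lemma bundle_step (j : ℕ) (ih : Bundle (j + 2)) : Bundle (j + 4) := by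
  obtain ⟨hg, hZ, hS⟩ := ih
  have hsm := berg_step_smooth j hg
  have key : ∀ m : ℕ, ∀ t ∈ Ioo (-1:ℝ) 1, Sf (j+4) m t =
      (((j:ℝ)+3)/(2*π)) * ((1 - t^2) * Sf (j+2) m t)
      + (((j:ℝ)+3)/(2*π*((j:ℝ)+1))) * (t * Sf (j+2) (m+1) t)
      + (((j:ℝ)+3)/(2*π*((j:ℝ)+1))) * m * ((1 - t^2) * Sf (j+2) m t)
      + (((j:ℝ)+3)/(2*π*sphereVol (j+2))) * ((1 - t^2) ^ (((j:ℝ)+1)/2 + m) * ind m t) := by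
    intro m t ht
    have hpos := one_sub_sq_pos ht
    have hA2 : Sf (j+2) m t
        = (1 - t^2) ^ (((j:ℝ)-1)/2 + m) * iteratedDeriv m (berg (j+2)) t := by
      unfold Sf
      rw [show (((j+2 : ℕ) : ℝ) - 3)/2 + (m:ℝ) = ((j:ℝ)-1)/2 + m by push_cast; ring]
    have hA3 : Sf (j+2) (m+1) t
        = ((1 - t^2) * (1 - t^2) ^ (((j:ℝ)-1)/2 + m)) * iteratedDeriv (m+1) (berg (j+2)) t := by
      unfold Sf
      rw [show (((j+2 : ℕ) : ℝ) - 3)/2 + ((m+1 : ℕ):ℝ) = 1 + (((j:ℝ)-1)/2 + m) by push_cast; ring,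
        Real.rpow_add hpos, Real.rpow_one]
    have hA4 : Sf (j+4) m t
        = ((1 - t^2) * (1 - t^2) ^ (((j:ℝ)-1)/2 + m)) * iteratedDeriv m (berg (j+4)) t := by
      unfold Sf
      rw [show (((j+4 : ℕ) : ℝ) - 3)/2 + (m:ℝ) = 1 + (((j:ℝ)-1)/2 + m) by push_cast; ring,
        Real.rpow_add hpos, Real.rpow_one]
    have hA5 : (1 - t^2 : ℝ) ^ (((j:ℝ)+1)/2 + (m:ℝ))
        = (1 - t^2) * (1 - t^2) ^ (((j:ℝ)-1)/2 + m) := by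
      rw [show ((j:ℝ)+1)/2 + (m:ℝ) = 1 + (((j:ℝ)-1)/2 + m) by ring,
        Real.rpow_add hpos, Real.rpow_one]
    rw [hA4, bergRec j hg m t ht, hA2, hA3, hA5]
    ring
  have S4 : ∀ m : ℕ, Tendsto (Sf (j+4) m) (𝓝[Ioo (-1:ℝ) 1] (-1)) (𝓝 0) ∧
      Tendsto (Sf (j+4) m) (𝓝[Ioo (-1:ℝ) 1] 1) (𝓝 (Lc (j+4) m)) := by
    intro m
    have hm1 : ¬(((j+2) = 2 ∨ (j+2) = 3) ∧ (m+1) = 0) := by omega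
    obtain ⟨hSm1n, hSm1p⟩ := hS (m+1) hm1
    obtain ⟨hZn, hZp⟩ := hZ m
    have hpexp : (0:ℝ) < ((j:ℝ)+1)/2 + m := by positivity
    constructor
    · have tid : Tendsto (fun t : ℝ => t) (𝓝[Ioo (-1:ℝ) 1] (-1)) (𝓝 (-1)) :=
        (continuous_id.tendsto _).mono_left nhdsWithin_le_nhds
      have tind : Tendsto (ind m) (𝓝[Ioo (-1:ℝ) 1] (-1)) (𝓝 (ind m (-1))) :=
        ((ind_continuous m).tendsto _).mono_left nhdsWithin_le_nhds
      have T : Tendsto (fun t : ℝ =>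
          (((j:ℝ)+3)/(2*π)) * ((1 - t^2) * Sf (j+2) m t)
          + (((j:ℝ)+3)/(2*π*((j:ℝ)+1))) * (t * Sf (j+2) (m+1) t)
          + (((j:ℝ)+3)/(2*π*((j:ℝ)+1))) * m * ((1 - t^2) * Sf (j+2) m t)
          + (((j:ℝ)+3)/(2*π*sphereVol (j+2))) * ((1 - t^2) ^ (((j:ℝ)+1)/2 + m) * ind m t))
          (𝓝[Ioo (-1:ℝ) 1] (-1))
          (𝓝 ((((j:ℝ)+3)/(2*π)) * 0 + (((j:ℝ)+3)/(2*π*((j:ℝ)+1))) * ((-1) * 0)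
            + (((j:ℝ)+3)/(2*π*((j:ℝ)+1))) * m * 0
            + (((j:ℝ)+3)/(2*π*sphereVol (j+2))) * (0 * ind m (-1)))) :=
        (((hZn.const_mul _).add ((tid.mul hSm1n).const_mul _)).add
          (hZn.const_mul _)).add
          (((tendsto_rpow_one_sub_sq (Or.inr rfl) hpexp).mul tind).const_mul _)
      have T' := T.congr' (ev_within (key m)).symm
      simpa using T'
    · have tid : Tendsto (fun t : ℝ => t) (𝓝[Ioo (-1:ℝ) 1] 1) (𝓝 1) :=
        (continuous_id.tendsto _).mono_left nhdsWithin_le_nhds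
      have tind : Tendsto (ind m) (𝓝[Ioo (-1:ℝ) 1] 1) (𝓝 (ind m 1)) :=
        ((ind_continuous m).tendsto _).mono_left nhdsWithin_le_nhds
      have T : Tendsto (fun t : ℝ =>
          (((j:ℝ)+3)/(2*π)) * ((1 - t^2) * Sf (j+2) m t)
          + (((j:ℝ)+3)/(2*π*((j:ℝ)+1))) * (t * Sf (j+2) (m+1) t)
          + (((j:ℝ)+3)/(2*π*((j:ℝ)+1))) * m * ((1 - t^2) * Sf (j+2) m t)
          + (((j:ℝ)+3)/(2*π*sphereVol (j+2))) * ((1 - t^2) ^ (((j:ℝ)+1)/2 + m) * ind m t))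
          (𝓝[Ioo (-1:ℝ) 1] 1)
          (𝓝 ((((j:ℝ)+3)/(2*π)) * 0 + (((j:ℝ)+3)/(2*π*((j:ℝ)+1))) * (1 * Lc (j+2) (m+1))
            + (((j:ℝ)+3)/(2*π*((j:ℝ)+1))) * m * 0
            + (((j:ℝ)+3)/(2*π*sphereVol (j+2))) * (0 * ind m 1))) :=
        (((hZp.const_mul _).add ((tid.mul hSm1p).const_mul _)).add
          (hZp.const_mul _)).add
          (((tendsto_rpow_one_sub_sq (Or.inl rfl) hpexp).mul tind).const_mul _)
      have T' := T.congr' (ev_within (key m)).symm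
      have hval : (((j:ℝ)+3)/(2*π)) * 0 + (((j:ℝ)+3)/(2*π*((j:ℝ)+1))) * (1 * Lc (j+2) (m+1))
            + (((j:ℝ)+3)/(2*π*((j:ℝ)+1))) * m * 0
            + (((j:ℝ)+3)/(2*π*sphereVol (j+2))) * (0 * ind m 1) = Lc (j+4) m := by
        rw [← Lc_step j m]; ring
      rwa [hval] at T'
  refine ⟨hsm, fun m => ?_, fun m _ => S4 m⟩
  have h1 : Tendsto (fun t : ℝ => 1 - t^2) (𝓝[Ioo (-1:ℝ) 1] (-1)) (𝓝 0) :=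
    (tendsto_one_sub_sq (Or.inr rfl)).mono_right nhdsWithin_le_nhds
  have h2 : Tendsto (fun t : ℝ => 1 - t^2) (𝓝[Ioo (-1:ℝ) 1] 1) (𝓝 0) :=
    (tendsto_one_sub_sq (Or.inl rfl)).mono_right nhdsWithin_le_nhds
  exact ⟨by simpa using h1.mul (S4 m).1, by simpa using h2.mul (S4 m).2⟩

lemma rpow_half_inv {x : ℝ} (hx : 0 < x) : x ^ (-(1:ℝ)/2) = 1 / Real.sqrt x := by
  rw [Real.sqrt_eq_rpow, show (-(1:ℝ)/2) = -(1/2) by ring, Real.rpow_neg hx.le, one_div]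
  simp

lemma berg2_deriv1 : ∀ t ∈ Ioo (-1:ℝ) 1, deriv (berg 2) t =
    (1 - t^2) ^ (-(1:ℝ)/2) *
      ((π - Real.arccos t) * (-(1/(2*π)) * t) + Real.sqrt (1 - t^2) * (1/(4*π))) := by
  intro t ht
  have hpos := one_sub_sq_pos ht
  have hs : Real.sqrt (1 - t^2) ≠ 0 := by positivity
  have hsq : Real.sqrt (1 - t^2) ^ 2 = 1 - t^2 := Real.sq_sqrt hpos.le
  have h0 : HasDerivAt (fun t : ℝ => 1 - t^2) (-(2*t)) t := by
    simpa using ((hasDerivAt_pow 2 t).const_sub 1)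
  have hA : HasDerivAt (fun t : ℝ => π - Real.arccos t) (1/Real.sqrt (1-t^2)) t := by
    simpa using (Real.hasDerivAt_arccos ht.1.ne' ht.2.ne).const_sub π
  have hsqrt : HasDerivAt (fun t : ℝ => Real.sqrt (1 - t^2)) (-(2*t) / (2 * Real.sqrt (1-t^2))) t :=
    h0.sqrt hpos.ne'
  have H : HasDerivAt (berg 2)
      (((1/(2*π)) * (1/Real.sqrt (1-t^2))) * Real.sqrt (1-t^2)
        + ((1/(2*π)) * (π - Real.arccos t)) * (-(2*t) / (2 * Real.sqrt (1-t^2)))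
        - 1/(4*π)) t := by
    exact ((hA.const_mul (1/(2*π))).mul hsqrt).sub ((hasDerivAt_id' t).div_const (4*π))
  rw [H.deriv, rpow_half_inv hpos]
  set s := Real.sqrt (1 - t^2) with hsdef
  field_simp
  ring


lemma berg2_formula (m : ℕ) : ∃ P Q : Polynomial ℝ,
    P.eval 1 = -(2:ℝ) ^ (((m:ℝ)+1) - 2) * Real.Gamma (((m:ℝ)+1) - 1/2) / π ^ ((3:ℝ)/2) ∧
    ∀ t ∈ Ioo (-1:ℝ) 1, iteratedDeriv (m+1) (berg 2) t =
      (1 - t^2) ^ ((1:ℝ)/2 - ((m:ℝ)+1)) *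
        ((π - Real.arccos t) * Polynomial.eval t P + Real.sqrt (1 - t^2) * Polynomial.eval t Q) := by
  induction m with
  | zero =>
    refine ⟨Polynomial.C (-(1/(2*π))) * Polynomial.X, Polynomial.C (1/(4*π)), ?_, ?_⟩
    · simp only [Polynomial.eval_mul, Polynomial.eval_C, Polynomial.eval_X, mul_one]
      rw [show ((0:ℕ):ℝ) + 1 - 2 = -1 by norm_num, show ((0:ℕ):ℝ) + 1 - 1/2 = 1/2 by norm_num,
        Real.Gamma_one_half_eq, Real.rpow_neg_one,
        show (3:ℝ)/2 = 1 + 1/2 by norm_num, Real.rpow_add pi_pos, Real.rpow_one,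
        ← Real.sqrt_eq_rpow]
      have h1 : Real.sqrt π ≠ 0 := by positivity
      have h2 : π ≠ 0 := pi_ne_zero
      have h3 : Real.sqrt π * Real.sqrt π = π := Real.mul_self_sqrt pi_pos.le
      field_simp
    · intro t ht
      rw [iteratedDeriv_one, berg2_deriv1 t ht]
      simp only [Polynomial.eval_mul, Polynomial.eval_C, Polynomial.eval_X]
      norm_num
  | succ m IH =>
    obtain ⟨P, Q, hP1, hF⟩ := IH
    refine ⟨Polynomial.C (2*((m:ℝ)+1)-1) * (Polynomial.X * P)
        + (1 - Polynomial.X^2) * Polynomial.derivative P,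
      Polynomial.C (2*((m:ℝ)+1)-1) * (Polynomial.X * Q) - Polynomial.X * Q
        + (1 - Polynomial.X^2) * Polynomial.derivative Q + P, ?_, ?_⟩
    · simp only [Polynomial.eval_add, Polynomial.eval_mul, Polynomial.eval_sub,
        Polynomial.eval_C, Polynomial.eval_X, Polynomial.eval_pow, Polynomial.eval_one]
      rw [hP1]
      have harg : ((m:ℝ)+1) + 1 - 1/2 = (((m:ℝ)+1) - 1/2) + 1 := by ring
      have hne : ((m:ℝ)+1) - 1/2 ≠ 0 := by
        have : (0:ℝ) ≤ m := Nat.cast_nonneg m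
        intro h; nlinarith
      rw [show (((m+1:ℕ)):ℝ) + 1 - 1/2 = (((m:ℝ)+1) - 1/2) + 1 by push_cast; ring,
        Real.Gamma_add_one hne,
        show (((m+1:ℕ)):ℝ) + 1 - 2 = (((m:ℝ)+1) - 2) + 1 by push_cast; ring,
        Real.rpow_add two_pos, Real.rpow_one]
      ring
    · intro t ht
      rw [iterDeriv_congr hF ht]
      have hpos := one_sub_sq_pos ht
      have hs : Real.sqrt (1 - t^2) ≠ 0 := by positivity
      have hsq : Real.sqrt (1 - t^2) ^ 2 = 1 - t^2 := Real.sq_sqrt hpos.le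
      set α : ℝ := (1:ℝ)/2 - ((m:ℝ)+1) with hα
      have h0 : HasDerivAt (fun t : ℝ => 1 - t^2) (-(2*t)) t := by
        simpa using ((hasDerivAt_pow 2 t).const_sub 1)
      have hrp : HasDerivAt (fun t : ℝ => (1-t^2)^α) (-(2*t) * α * (1-t^2)^(α - 1)) t :=
        h0.rpow_const (Or.inl hpos.ne')
      have hA : HasDerivAt (fun t : ℝ => π - Real.arccos t) (1/Real.sqrt (1-t^2)) t := by
        simpa using (Real.hasDerivAt_arccos ht.1.ne' ht.2.ne).const_sub π
      have hsqrt : HasDerivAt (fun t : ℝ => Real.sqrt (1 - t^2))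
          (-(2*t) / (2 * Real.sqrt (1-t^2))) t := h0.sqrt hpos.ne'
      have hPd := Polynomial.hasDerivAt P t
      have hQd := Polynomial.hasDerivAt Q t
      have hB : HasDerivAt (fun t : ℝ => (π - Real.arccos t) * Polynomial.eval t P
          + Real.sqrt (1 - t^2) * Polynomial.eval t Q)
          ((1/Real.sqrt (1-t^2)) * Polynomial.eval t P
            + (π - Real.arccos t) * Polynomial.eval t (Polynomial.derivative P)
            + ((-(2*t) / (2 * Real.sqrt (1-t^2))) * Polynomial.eval t Q
            + Real.sqrt (1 - t^2) * Polynomial.eval t (Polynomial.derivative Q))) t :=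
        (hA.mul hPd).add (hsqrt.mul hQd)
      have H := hrp.mul hB
      simp only [Pi.mul_def] at H
      rw [H.deriv]
      have e1 := Real.rpow_add_one (x := 1-t^2) hpos.ne' (α-1)
      rw [show α - 1 + 1 = α by ring] at e1
      have hexp : (1:ℝ)/2 - ((((m+1:ℕ)):ℝ)+1) = α - 1 := by rw [hα]; push_cast; ring
      rw [hexp, e1]
      simp only [Polynomial.eval_add, Polynomial.eval_mul, Polynomial.eval_sub,
        Polynomial.eval_C, Polynomial.eval_X, Polynomial.eval_pow, Polynomial.eval_one]
      set s := Real.sqrt (1 - t^2) with hsdef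
      set r := (1 - t^2) ^ (α - 1) with hrdef
      rw [← hsq]
      field_simp
      ring

lemma berg2_continuous : Continuous (berg 2) := by
  show Continuous (fun t : ℝ => (1 / (2 * π)) * (π - Real.arccos t) * Real.sqrt (1 - t ^ 2) - t / (4 * π))
  exact ((continuous_const.mul (continuous_const.sub Real.continuous_arccos)).mul
    (Real.continuous_sqrt.comp (continuous_const.sub (continuous_pow 2)))).sub
    (continuous_id.div_const _)

lemma bundle2 : Bundle 2 := by
  have hS : ∀ m : ℕ, Tendsto (Sf 2 (m+1)) (𝓝[Ioo (-1:ℝ) 1] (-1)) (𝓝 0) ∧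
      Tendsto (Sf 2 (m+1)) (𝓝[Ioo (-1:ℝ) 1] 1) (𝓝 (Lc 2 (m+1))) := by
    intro m
    obtain ⟨P, Q, hP1, hF⟩ := berg2_formula m
    set B : ℝ → ℝ := fun t => (π - Real.arccos t) * Polynomial.eval t P
      + Real.sqrt (1 - t^2) * Polynomial.eval t Q with hB
    have hBc : Continuous B :=
      ((continuous_const.sub Real.continuous_arccos).mul P.continuous_aeval).add
        ((Real.continuous_sqrt.comp (continuous_const.sub (continuous_pow 2))).mul Q.continuous_aeval)
    have keyB : ∀ t ∈ Ioo (-1:ℝ) 1, Sf 2 (m+1) t = B t := by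
      intro t ht
      have hpos := one_sub_sq_pos ht
      unfold Sf
      rw [hF t ht, ← mul_assoc, ← Real.rpow_add hpos,
        show (((2:ℕ):ℝ)-3)/2 + ((m+1:ℕ):ℝ) + ((1:ℝ)/2 - ((m:ℝ)+1)) = 0 by push_cast; ring,
        Real.rpow_zero, one_mul]
    constructor
    · have hBv : B (-1) = 0 := by
        simp [hB, Real.arccos_neg_one]
      have := (hBc.tendsto (-1)).mono_left
        (nhdsWithin_le_nhds (s := Ioo (-1:ℝ) 1))
      rw [hBv] at this
      exact this.congr' (ev_within keyB).symm
    · have hBv : B 1 = π * Polynomial.eval 1 P := by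
        simp [hB, Real.arccos_one]
      have hLc : π * Polynomial.eval 1 P = Lc 2 (m+1) := by
        rw [hP1]
        unfold Lc
        rw [show (((2:ℕ):ℝ)-3)/2 + ((m+1:ℕ):ℝ) = ((m:ℝ)+1) - 1/2 by push_cast; ring,
          show (((m+1:ℕ)):ℝ) - 2 = ((m:ℝ)+1) - 2 by push_cast; ring,
          show (((2:ℕ):ℝ)-1)/2 = (1:ℝ)/2 by norm_num,
          show (3:ℝ)/2 = (1:ℝ)/2 + 1 by norm_num, Real.rpow_add pi_pos, Real.rpow_one]
        have h2 : (π:ℝ) ^ ((1:ℝ)/2) ≠ 0 := (Real.rpow_pos_of_pos pi_pos _).ne'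
        push_cast
        field_simp
        ring
      have := (hBc.tendsto 1).mono_left (nhdsWithin_le_nhds (s := Ioo (-1:ℝ) 1))
      rw [hBv, hLc] at this
      exact this.congr' (ev_within keyB).symm
  refine ⟨berg2_smooth, fun m => ?_, fun m hm => ?_⟩
  · match m with
    | 0 =>
      have key0 : ∀ t ∈ Ioo (-1:ℝ) 1, (1 - t^2) * Sf 2 0 t = Real.sqrt (1-t^2) * berg 2 t := by
        intro t ht
        have hpos := one_sub_sq_pos ht
        unfold Sf
        rw [iteratedDeriv_zero, ← mul_assoc]
        congr 1
        have h := Real.rpow_add hpos 1 (-(1/2))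
        rw [Real.rpow_one, show (1:ℝ) + -(1/2) = 1/2 by norm_num] at h
        rw [show (((2:ℕ):ℝ)-3)/2 + ((0:ℕ):ℝ) = -(1/2) by push_cast; ring, ← h,
          ← Real.sqrt_eq_rpow]
      have hc : Continuous (fun t : ℝ => Real.sqrt (1-t^2) * berg 2 t) :=
        (Real.continuous_sqrt.comp (continuous_const.sub (continuous_pow 2))).mul berg2_continuous
      constructor
      · have := (hc.tendsto (-1)).mono_left (nhdsWithin_le_nhds (s := Ioo (-1:ℝ) 1))
        simp only [show (1:ℝ)-(-1:ℝ)^2 = 0 by norm_num, Real.sqrt_zero, zero_mul] at this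
        exact this.congr' (ev_within key0).symm
      · have := (hc.tendsto 1).mono_left (nhdsWithin_le_nhds (s := Ioo (-1:ℝ) 1))
        simp only [show (1:ℝ)-(1:ℝ)^2 = 0 by norm_num, Real.sqrt_zero, zero_mul] at this
        exact this.congr' (ev_within key0).symm
    | (m+1) =>
      have h1 : Tendsto (fun t : ℝ => 1 - t^2) (𝓝[Ioo (-1:ℝ) 1] (-1)) (𝓝 0) :=
        (tendsto_one_sub_sq (Or.inr rfl)).mono_right nhdsWithin_le_nhds
      have h2 : Tendsto (fun t : ℝ => 1 - t^2) (𝓝[Ioo (-1:ℝ) 1] 1) (𝓝 0) :=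
        (tendsto_one_sub_sq (Or.inl rfl)).mono_right nhdsWithin_le_nhds
      exact ⟨by simpa using h1.mul (hS m).1, by simpa using h2.mul (hS m).2⟩
  · match m, hm with
    | (m+1), _ => exact hS m

lemma one_sub_pos' {t : ℝ} (ht : t ∈ Ioo (-1:ℝ) 1) : 0 < 1 - t := by
  have := ht.2; linarith

lemma berg3_deriv1 : ∀ t ∈ Ioo (-1:ℝ) 1, deriv (berg 3) t =
    (1/(2*π)) * (Real.log (1-t) - t/(1-t) + (4/3 - Real.log 2)) := by
  intro t ht
  have hne : (1:ℝ) - t ≠ 0 := (one_sub_pos' ht).ne'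
  have h0 : HasDerivAt (fun t : ℝ => 1 - t) (-1) t := by
    simpa using (hasDerivAt_id' t).const_sub 1
  have hlog : HasDerivAt (fun t : ℝ => Real.log (1-t)) (-(1-t)⁻¹) t := by
    exact ((Real.hasDerivAt_log hne).comp t h0).congr_deriv (by ring)
  have H : HasDerivAt (berg 3)
      ((1/(2*π)) * ((0 + (1 * Real.log (1-t) + t * -(1-t)⁻¹)) + (4/3 - Real.log 2) * 1)) t := by
    exact (((hasDerivAt_const t 1).add ((hasDerivAt_id' t).mul hlog)).add
      ((hasDerivAt_id' t).const_mul (4/3 - Real.log 2))).const_mul (1/(2*π))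
  rw [H.deriv]
  field_simp
  ring

lemma berg3_formula : ∀ m : ℕ, ∀ t ∈ Ioo (-1:ℝ) 1, iteratedDeriv (m+2) (berg 3) t =
    -(1/(2*π)) * ((Nat.factorial m : ℝ)/(1-t)^(m+1)
      + (Nat.factorial (m+1) : ℝ)/(1-t)^(m+2)) := by
  intro m
  induction m with
  | zero =>
    have h1 : ∀ t ∈ Ioo (-1:ℝ) 1, iteratedDeriv 1 (berg 3) t =
        (1/(2*π)) * (Real.log (1-t) - t/(1-t) + (4/3 - Real.log 2)) := by
      intro t ht; rw [iteratedDeriv_one]; exact berg3_deriv1 t ht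
    intro t ht
    rw [show (0+2 : ℕ) = 1+1 from rfl, iterDeriv_congr h1 ht]
    have hne : (1:ℝ) - t ≠ 0 := (one_sub_pos' ht).ne'
    have h0 : HasDerivAt (fun t : ℝ => 1 - t) (-1) t := by
      simpa using (hasDerivAt_id' t).const_sub 1
    have hlog : HasDerivAt (fun t : ℝ => Real.log (1-t)) (-(1-t)⁻¹) t := by
      exact ((Real.hasDerivAt_log hne).comp t h0).congr_deriv (by ring)
    have hdiv : HasDerivAt (fun t : ℝ => t/(1-t)) ((1*(1-t) - t*(-1))/(1-t)^2) t :=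
      (hasDerivAt_id' t).div h0 hne
    have H := (((hlog.sub hdiv).add_const (4/3 - Real.log 2))).const_mul (1/(2*π))
    simp only [Pi.sub_apply] at H
    rw [H.deriv]
    simp only [Nat.factorial]
    field_simp
    ring
  | succ m IH =>
    intro t ht
    rw [show (m+1+2 : ℕ) = (m+2)+1 from rfl, iterDeriv_congr IH ht]
    have hne : (1:ℝ) - t ≠ 0 := (one_sub_pos' ht).ne'
    have h0 : HasDerivAt (fun t : ℝ => 1 - t) (-1) t := by
      simpa using (hasDerivAt_id' t).const_sub 1
    have hp1 : HasDerivAt (fun t : ℝ => (1-t)^(m+1)) ((↑(m+1) * (1-t)^m) * (-1)) t := by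
      simpa [Pi.pow_def] using h0.pow (m+1)
    have hp2 : HasDerivAt (fun t : ℝ => (1-t)^(m+2)) ((↑(m+2) * (1-t)^(m+1)) * (-1)) t := by
      simpa [Pi.pow_def] using h0.pow (m+2)
    have hd1 : HasDerivAt (fun t : ℝ => (Nat.factorial m : ℝ)/(1-t)^(m+1))
        ((0 * (1-t)^(m+1) - (Nat.factorial m : ℝ) * ((↑(m+1) * (1-t)^m) * (-1)))/((1-t)^(m+1))^2) t :=
      (hasDerivAt_const t _).div hp1 (pow_ne_zero _ hne)
    have hd2 : HasDerivAt (fun t : ℝ => (Nat.factorial (m+1) : ℝ)/(1-t)^(m+2))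
        ((0 * (1-t)^(m+2) - (Nat.factorial (m+1) : ℝ) * ((↑(m+2) * (1-t)^(m+1)) * (-1)))/((1-t)^(m+2))^2) t :=
      (hasDerivAt_const t _).div hp2 (pow_ne_zero _ hne)
    have H := (hd1.add hd2).const_mul (-(1/(2*π)))
    simp only [Pi.add_apply] at H
    rw [H.deriv]
    have hfac1 : (Nat.factorial (m+1) : ℝ) = (m+1) * Nat.factorial m := by
      push_cast [Nat.factorial_succ]; ring
    have hfac2 : (Nat.factorial (m+2) : ℝ) = (m+2) * Nat.factorial (m+1) := by
      push_cast [Nat.factorial_succ]; ring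
    rw [hfac2, hfac1]
    field_simp
    push_cast
    ring

lemma tendsto_log_one_sub_at_one :
    Tendsto (fun t : ℝ => Real.log (1-t) * (1-t)) (𝓝[Ioo (-1:ℝ) 1] 1) (𝓝 0) := by
  have h := tendsto_log_mul_rpow_nhdsGT_zero one_pos
  simp only [Real.rpow_one] at h
  have hmap : Tendsto (fun t : ℝ => 1 - t) (𝓝[Ioo (-1:ℝ) 1] 1) (𝓝[>] (0:ℝ)) := by
    rw [tendsto_nhdsWithin_iff]
    constructor
    · have h2 : Tendsto (fun t : ℝ => 1 - t) (𝓝 (1:ℝ)) (𝓝 (1-1)) :=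
        (continuous_const.sub continuous_id).tendsto 1
      rw [show (1:ℝ)-1 = 0 by norm_num] at h2
      exact h2.mono_left nhdsWithin_le_nhds
    · exact eventually_nhdsWithin_of_forall fun t ht => by
        simp only [mem_Ioi]; linarith [ht.2]
  exact h.comp hmap

lemma tendsto_cont {c : ℝ} {f : ℝ → ℝ} (hf : Continuous f) :
    Tendsto f (𝓝[Ioo (-1:ℝ) 1] c) (𝓝 (f c)) :=
  (hf.tendsto c).mono_left nhdsWithin_le_nhds

lemma tendsto_contAt {c : ℝ} {f : ℝ → ℝ} (hf : ContinuousAt f c) :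
    Tendsto f (𝓝[Ioo (-1:ℝ) 1] c) (𝓝 (f c)) :=
  hf.tendsto.mono_left nhdsWithin_le_nhds

lemma log_one_sub_contAt {c : ℝ} (hc : (1:ℝ) - c ≠ 0) :
    ContinuousAt (fun t : ℝ => Real.log (1-t)) c :=
  ContinuousAt.log ((continuous_const.sub continuous_id).continuousAt) hc

lemma bundle3 : Bundle 3 := by
  have c32 : (4:ℝ)/3 - Real.log 2 = 4/3 - Real.log 2 := rfl
  -- m = 1 key identity
  have key1 : ∀ t ∈ Ioo (-1:ℝ) 1, Sf 3 1 t =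
      (1/(2*π)) * ((1+t)*(Real.log (1-t)*(1-t)) - t*(1+t) + (4/3 - Real.log 2)*(1-t^2)) := by
    intro t ht
    have hne : (1:ℝ) - t ≠ 0 := (one_sub_pos' ht).ne'
    unfold Sf
    rw [show (((3:ℕ):ℝ)-3)/2 + ((1:ℕ):ℝ) = 1 by norm_num, Real.rpow_one,
      iteratedDeriv_one, berg3_deriv1 t ht]
    field_simp
    ring
  -- m ≥ 2 key identity
  have key2 : ∀ m : ℕ, ∀ t ∈ Ioo (-1:ℝ) 1, Sf 3 (m+2) t =
      -(1/(2*π)) * ((Nat.factorial m : ℝ)*(1-t)*(1+t)^(m+2)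
        + (Nat.factorial (m+1) : ℝ)*(1+t)^(m+2)) := by
    intro m t ht
    have hne : (1:ℝ) - t ≠ 0 := (one_sub_pos' ht).ne'
    unfold Sf
    rw [show (((3:ℕ):ℝ)-3)/2 + ((m+2:ℕ):ℝ) = ((m+2:ℕ):ℝ) by norm_num, Real.rpow_natCast,
      berg3_formula m t ht, show (1:ℝ) - t^2 = (1-t)*(1+t) by ring, mul_pow]
    field_simp
    ring
  -- m = 0 Z identity
  have key0 : ∀ t ∈ Ioo (-1:ℝ) 1, (1 - t^2) * Sf 3 0 t =
      (1/(2*π)) * ((1-t^2) + (t*(1+t))*(Real.log (1-t)*(1-t))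
        + (4/3 - Real.log 2)*(t*(1-t^2))) := by
    intro t ht
    unfold Sf
    rw [show (((3:ℕ):ℝ)-3)/2 + ((0:ℕ):ℝ) = 0 by norm_num, Real.rpow_zero, one_mul,
      iteratedDeriv_zero]
    show (1 - t^2) * ((1 / (2 * π)) * (1 + t * Real.log (1 - t) + (4 / 3 - Real.log 2) * t)) = _
    ring
  -- limits m = 1
  have hS1 : Tendsto (Sf 3 1) (𝓝[Ioo (-1:ℝ) 1] (-1)) (𝓝 0) ∧
      Tendsto (Sf 3 1) (𝓝[Ioo (-1:ℝ) 1] 1) (𝓝 (Lc 3 1)) := by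
    constructor
    · have hc : ContinuousAt (fun t : ℝ =>
          (1/(2*π)) * ((1+t)*(Real.log (1-t)*(1-t)) - t*(1+t) + (4/3 - Real.log 2)*(1-t^2))) (-1) := by
        have hl := log_one_sub_contAt (c := (-1:ℝ)) (by norm_num)
        fun_prop
      have T := tendsto_contAt hc
      have hv : (1/(2*π)) * ((1+(-1:ℝ))*(Real.log (1-(-1:ℝ))*(1-(-1:ℝ))) - (-1:ℝ)*(1+(-1:ℝ))
          + (4/3 - Real.log 2)*(1-(-1:ℝ)^2)) = 0 := by norm_num
      rw [hv] at T
      exact T.congr' (ev_within key1).symm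
    · have t2 : Tendsto (fun t : ℝ => 1+t) (𝓝[Ioo (-1:ℝ) 1] 1) (𝓝 (1+1)) :=
        tendsto_cont (continuous_const.add continuous_id)
      have t3 : Tendsto (fun t : ℝ => t*(1+t)) (𝓝[Ioo (-1:ℝ) 1] 1) (𝓝 (1*(1+1))) :=
        tendsto_cont (continuous_id.mul (continuous_const.add continuous_id))
      have t4 : Tendsto (fun t : ℝ => (4/3 - Real.log 2)*(1-t^2)) (𝓝[Ioo (-1:ℝ) 1] 1)
          (𝓝 ((4/3 - Real.log 2)*(1-1^2))) :=
        tendsto_cont (continuous_const.mul (continuous_const.sub (continuous_pow 2)))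
      have T := (((t2.mul tendsto_log_one_sub_at_one).sub t3).add t4).const_mul (1/(2*π))
      have hval : (1/(2*π)) * (((1+1) * 0 - 1*(1+1)) + (4/3 - Real.log 2)*(1-1^2)) = Lc 3 1 := by
        unfold Lc
        push_cast
        rw [show (1:ℝ) - 2 = -1 by norm_num, Real.rpow_neg_one,
          show ((3:ℝ)-3)/2 + (1:ℝ) = 1 by norm_num, Real.Gamma_one,
          show ((3:ℝ)-1)/2 = 1 by norm_num, Real.rpow_one]
        field_simp
        ring
      rw [show ((1:ℝ)+1) * 0 - 1*(1+1) + (4/3 - Real.log 2)*(1-1^2)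
        = ((1+1) * 0 - 1*(1+1)) + (4/3 - Real.log 2)*(1-1^2) by ring] at T
      rw [hval] at T
      exact T.congr' (ev_within key1).symm
  -- limits m ≥ 2
  have hS2 : ∀ m : ℕ, Tendsto (Sf 3 (m+2)) (𝓝[Ioo (-1:ℝ) 1] (-1)) (𝓝 0) ∧
      Tendsto (Sf 3 (m+2)) (𝓝[Ioo (-1:ℝ) 1] 1) (𝓝 (Lc 3 (m+2))) := by
    intro m
    set G : ℝ → ℝ := fun t => -(1/(2*π)) * ((Nat.factorial m : ℝ)*(1-t)*(1+t)^(m+2)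
        + (Nat.factorial (m+1) : ℝ)*(1+t)^(m+2)) with hG
    have hGc : Continuous G := by
      apply continuous_const.mul
      exact ((continuous_const.mul (continuous_const.sub continuous_id)).mul
        ((continuous_const.add continuous_id).pow _)).add
        (continuous_const.mul ((continuous_const.add continuous_id).pow _))
    constructor
    · have T := tendsto_cont (c := (-1:ℝ)) hGc
      have hval : G (-1) = 0 := by
        simp [hG]
      rw [hval] at T
      exact T.congr' (ev_within (key2 m)).symm
    · have T := tendsto_cont (c := (1:ℝ)) hGc
      have hval : G 1 = Lc 3 (m+2) := by
        simp only [hG]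
        unfold Lc
        rw [show ((((3:ℕ)):ℝ)-3)/2 + ((m+2:ℕ):ℝ) = ((m+1:ℕ):ℝ)+1 by push_cast; ring,
          Real.Gamma_nat_eq_factorial,
          show ((m+2:ℕ):ℝ) - 2 = ((m:ℕ):ℝ) by push_cast; ring, Real.rpow_natCast,
          show ((((3:ℕ)):ℝ)-1)/2 = 1 by norm_num, Real.rpow_one]
        have : (1:ℝ) - 1 = 0 := by norm_num
        rw [this]
        field_simp
        ring
      rw [hval] at T
      exact T.congr' (ev_within (key2 m)).symm
  refine ⟨berg3_smooth, fun m => ?_, fun m hm => ?_⟩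
  · match m with
    | 0 =>
      constructor
      · have hc : ContinuousAt (fun t : ℝ =>
            (1/(2*π)) * ((1-t^2) + (t*(1+t))*(Real.log (1-t)*(1-t))
              + (4/3 - Real.log 2)*(t*(1-t^2)))) (-1) := by
          have hl := log_one_sub_contAt (c := (-1:ℝ)) (by norm_num)
          fun_prop
        have T := tendsto_contAt hc
        have hv : (1/(2*π)) * ((1-(-1:ℝ)^2) + ((-1:ℝ)*(1+(-1:ℝ)))*(Real.log (1-(-1:ℝ))*(1-(-1:ℝ)))
            + (4/3 - Real.log 2)*((-1:ℝ)*(1-(-1:ℝ)^2))) = 0 := by norm_num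
        rw [hv] at T
        exact T.congr' (ev_within key0).symm
      · have t1 : Tendsto (fun t : ℝ => 1-t^2) (𝓝[Ioo (-1:ℝ) 1] 1) (𝓝 (1-1^2)) :=
          tendsto_cont (continuous_const.sub (continuous_pow 2))
        have t2 : Tendsto (fun t : ℝ => t*(1+t)) (𝓝[Ioo (-1:ℝ) 1] 1) (𝓝 (1*(1+1))) :=
          tendsto_cont (continuous_id.mul (continuous_const.add continuous_id))
        have t4 : Tendsto (fun t : ℝ => (4/3 - Real.log 2)*(t*(1-t^2))) (𝓝[Ioo (-1:ℝ) 1] 1)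
            (𝓝 ((4/3 - Real.log 2)*(1*(1-1^2)))) :=
          tendsto_cont (continuous_const.mul (continuous_id.mul
            (continuous_const.sub (continuous_pow 2))))
        have T := ((t1.add ((t2.mul tendsto_log_one_sub_at_one))).add t4).const_mul (1/(2*π))
        have hv : (1/(2*π)) * ((1-(1:ℝ)^2 + 1*(1+1)*0) + (4/3 - Real.log 2)*(1*(1-(1:ℝ)^2))) = 0 := by
          norm_num
        rw [hv] at T
        exact T.congr' (ev_within key0).symm
    | (m+1) =>
      have h1 : Tendsto (fun t : ℝ => 1 - t^2) (𝓝[Ioo (-1:ℝ) 1] (-1)) (𝓝 0) :=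
        (tendsto_one_sub_sq (Or.inr rfl)).mono_right nhdsWithin_le_nhds
      have h2 : Tendsto (fun t : ℝ => 1 - t^2) (𝓝[Ioo (-1:ℝ) 1] 1) (𝓝 0) :=
        (tendsto_one_sub_sq (Or.inl rfl)).mono_right nhdsWithin_le_nhds
      match m with
      | 0 => exact ⟨by simpa using h1.mul hS1.1, by simpa using h2.mul hS1.2⟩
      | (m+1) => exact ⟨by simpa using h1.mul (hS2 m).1, by simpa using h2.mul (hS2 m).2⟩
  · match m, hm with
    | 1, _ => exact hS1
    | (m+2), _ => exact hS2 m

theorem bundle_all : ∀ j : ℕ, Bundle (j + 2)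
  | 0 => bundle2
  | 1 => bundle3
  | (j + 2) => bundle_step j (bundle_all j)

/-- Limits at the endpoints of the weighted derivatives of the Berg functions
(Lemma 4.2 of the paper). -/
theorem stmt_0 (j m : ℕ) (hj : 2 ≤ j) (hjm : ¬((j = 2 ∧ m = 0) ∨ (j = 3 ∧ m = 0))) :
    Tendsto (fun t : ℝ => (1 - t ^ 2) ^ (((j : ℝ) - 3) / 2 + m) * iteratedDeriv m (berg j) t)
      (𝓝[Set.Ioo (-1 : ℝ) 1] (-1)) (𝓝 0) ∧
    Tendsto (fun t : ℝ => (1 - t ^ 2) ^ (((j : ℝ) - 3) / 2 + m) * iteratedDeriv m (berg j) t)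
      (𝓝[Set.Ioo (-1 : ℝ) 1] 1)
      (𝓝 (-(((j : ℝ) - 1) * 2 ^ ((m : ℝ) - 2) *
          (Real.Gamma (((j : ℝ) - 3) / 2 + m) / π ^ (((j : ℝ) - 1) / 2))))) := by
  obtain ⟨k, rfl⟩ := Nat.exists_eq_add_of_le hj
  have hb := (bundle_all k).2.2 m (by
    rintro ⟨h1 | h1, rfl⟩
    · exact hjm (Or.inl ⟨by omega, rfl⟩)
    · exact hjm (Or.inr ⟨by omega, rfl⟩))
  rw [show 2 + k = k + 2 by omega] at *
  exact hb
end

section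
/- For every integer j ≥ 2 there exists an even real-analytic function ĝ_j : (−π,π) → ℝ such that ĝ_j(θ) = g_j(−cos θ) for all θ ∈ (−π,π) \ {0}. -/
open Real Set Filter Topology

lemma analyticAt_of_complex {F : ℂ → ℂ} {f : ℝ → ℝ} {x : ℝ}
    (hF : AnalyticAt ℂ F (x : ℂ)) (h : ∀ y : ℝ, (F (y : ℂ)).re = f y) :
    AnalyticAt ℝ f x := by
  have h1 : AnalyticAt ℝ (fun y : ℝ => (F ((Complex.ofRealCLM : ℝ →L[ℝ] ℂ) y)).re) x :=
    (Complex.reCLM.analyticAt _).comp ((hF.restrictScalars).comp (Complex.ofRealCLM.analyticAt x))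
  exact h1.congr (Filter.Eventually.of_forall fun y => h y)

lemma analyticAt_rsin (x : ℝ) : AnalyticAt ℝ Real.sin x :=
  analyticAt_of_complex (Complex.differentiable_sin.analyticAt _) Complex.sin_ofReal_re

lemma analyticAt_rcos (x : ℝ) : AnalyticAt ℝ Real.cos x :=
  analyticAt_of_complex (Complex.differentiable_cos.analyticAt _) Complex.cos_ofReal_re

lemma analyticAt_rlog {x : ℝ} (hx : 0 < x) : AnalyticAt ℝ Real.log x :=
  analyticAt_of_complex (analyticAt_clog (Or.inl (by simpa using hx))) Complex.log_ofReal_re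

lemma analyticAt_dslope {g : ℝ → ℝ} {x : ℝ} (hg0 : AnalyticAt ℝ g 0) (hg : AnalyticAt ℝ g x) :
    AnalyticAt ℝ (dslope g 0) x := by
  rcases eq_or_ne x 0 with rfl | hx
  · obtain ⟨p, hp⟩ := hg0
    exact hp.has_fpower_series_dslope_fslope.analyticAt
  · have h1 : AnalyticAt ℝ (fun y => (g y - g 0) / (y - 0)) x :=
      (hg.sub analyticAt_const).div (analyticAt_id.sub analyticAt_const) (by simpa using hx)
    refine h1.congr ?_
    filter_upwards [isOpen_compl_singleton.mem_nhds hx] with y hy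
    rw [dslope_of_ne _ hy, slope_def_field]

def Good (j : ℕ) : Prop := ∃ f : ℝ → ℝ,
  (∀ θ ∈ Set.Ioo (-π) π, AnalyticAt ℝ f θ) ∧ (∀ θ : ℝ, f (-θ) = f θ) ∧
  (∀ θ ∈ Set.Ioo (-π) π, θ ≠ 0 → f θ = berg j (-Real.cos θ))

lemma one_add_cos_pos {θ : ℝ} (hθ : θ ∈ Set.Ioo (-π) π) : 0 < 1 + Real.cos θ := by
  have h1 : Real.cos (θ / 2) ^ 2 = 1 / 2 + Real.cos (2 * (θ / 2)) / 2 := Real.cos_sq (θ / 2)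
  have h2 : 0 < Real.cos (θ / 2) :=
    Real.cos_pos_of_mem_Ioo ⟨by simpa using by linarith [hθ.1], by linarith [hθ.2]⟩
  have h3 : 2 * (θ / 2) = θ := by ring
  rw [h3] at h1
  nlinarith

lemma cos_lt_one' {θ : ℝ} (hθ : θ ∈ Set.Ioo (-π) π) (h0 : θ ≠ 0) : Real.cos θ < 1 := by
  refine lt_of_le_of_ne (Real.cos_le_one θ) fun h => h0 ?_
  rw [Real.cos_eq_one_iff_of_lt_of_lt (by nlinarith [hθ.1, Real.pi_pos])
    (by nlinarith [hθ.2, Real.pi_pos])] at h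
  exact h

lemma neg_cos_mem {θ : ℝ} (hθ : θ ∈ Set.Ioo (-π) π) (h0 : θ ≠ 0) :
    -Real.cos θ ∈ Set.Ioo (-1 : ℝ) 1 := by
  constructor
  · simpa using cos_lt_one' hθ h0
  · have := one_add_cos_pos hθ; linarith

lemma good2 : Good 2 := by
  refine ⟨fun θ => θ * Real.sin θ / (2 * π) + Real.cos θ / (4 * π), fun θ _ => ?_, fun θ => ?_, ?_⟩
  · exact ((analyticAt_id.mul (analyticAt_rsin θ)).div analyticAt_const
      (by positivity)).add ((analyticAt_rcos θ).div analyticAt_const (by positivity))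
  · simp [Real.sin_neg, Real.cos_neg]
  · have key : ∀ θ : ℝ, 0 < θ → θ < π →
        θ * Real.sin θ / (2 * π) + Real.cos θ / (4 * π) = berg 2 (-Real.cos θ) := by
      intro θ h0 hπ
      have h1 : Real.arccos (-Real.cos θ) = π - θ := by
        rw [Real.arccos_neg, Real.arccos_cos h0.le hπ.le]
      have h2 : Real.sqrt (1 - (-Real.cos θ) ^ 2) = Real.sin θ := by
        rw [neg_sq, show 1 - Real.cos θ ^ 2 = Real.sin θ ^ 2 by
          nlinarith [Real.sin_sq_add_cos_sq θ], Real.sqrt_sq (Real.sin_nonneg_of_nonneg_of_le_pi h0.le hπ.le)]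
      show _ = (1 / (2 * π)) * (π - Real.arccos (-Real.cos θ)) * Real.sqrt (1 - (-Real.cos θ) ^ 2)
        - (-Real.cos θ) / (4 * π)
      rw [h1, h2]
      ring
    intro θ hθ h0
    rcases lt_or_gt_of_ne h0 with hneg | hpos
    · have := key (-θ) (by linarith) (by linarith [hθ.1])
      simp only [Real.sin_neg, Real.cos_neg] at this
      rw [← this]; ring
    · exact key θ hpos hθ.2

lemma good3 : Good 3 := by
  refine ⟨fun θ => (1 / (2 * π)) * (1 + (-Real.cos θ) * Real.log (1 + Real.cos θ)
      + (4 / 3 - Real.log 2) * (-Real.cos θ)), fun θ hθ => ?_, fun θ => by simp [Real.cos_neg], ?_⟩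
  · have hin : AnalyticAt ℝ (fun x : ℝ => 1 + Real.cos x) θ :=
      analyticAt_const.add (analyticAt_rcos θ)
    have hlog : AnalyticAt ℝ (fun θ => Real.log (1 + Real.cos θ)) θ :=
      AnalyticAt.comp (f := fun x : ℝ => 1 + Real.cos x)
        (analyticAt_rlog (one_add_cos_pos hθ)) hin
    exact analyticAt_const.mul ((analyticAt_const.add
      (((analyticAt_rcos θ).neg).mul hlog)).add (analyticAt_const.mul ((analyticAt_rcos θ).neg)))
  · intro θ hθ h0
    show _ = (1 / (2 * π)) * (1 + (-Real.cos θ) * Real.log (1 - (-Real.cos θ))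
      + (4 / 3 - Real.log 2) * (-Real.cos θ))
    rw [sub_neg_eq_add]

lemma zero_mem_Ioo_pi : (0 : ℝ) ∈ Set.Ioo (-π) π := ⟨neg_lt_zero.2 Real.pi_pos, Real.pi_pos⟩

lemma good_step (n : ℕ) (h : Good (n + 2)) : Good (n + 4) := by
  obtain ⟨f, hfa, hfe, hfb⟩ := h
  have hodd : ∀ x : ℝ, deriv f (-x) = -deriv f x := by
    intro x
    have hf : f = fun y => f (-y) := by funext y; rw [hfe y]
    have h2 : deriv f x = -deriv f (-x) := by
      conv_lhs => rw [hf]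
      exact deriv_comp_neg f x
    linarith
  have hd0 : deriv f 0 = 0 := by have := hodd 0; simp only [neg_zero] at this; linarith
  have hfa' : ∀ θ ∈ Set.Ioo (-π) π, AnalyticAt ℝ (deriv f) θ := by
    have h1 : AnalyticOnNhd ℝ f (Set.Ioo (-π) π) := hfa
    exact fun θ hθ => h1.deriv θ hθ
  set N : ℝ → ℝ := dslope (deriv f) 0 with hN
  set D : ℝ → ℝ := dslope Real.sin 0 with hD
  have hNa : ∀ θ ∈ Set.Ioo (-π) π, AnalyticAt ℝ N θ :=
    fun θ hθ => analyticAt_dslope (hfa' 0 zero_mem_Ioo_pi) (hfa' θ hθ)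
  have hDa : ∀ θ : ℝ, AnalyticAt ℝ D θ :=
    fun θ => analyticAt_dslope (analyticAt_rsin 0) (analyticAt_rsin θ)
  have hsin_ne : ∀ θ ∈ Set.Ioo (-π) π, θ ≠ 0 → Real.sin θ ≠ 0 := by
    intro θ hθ h0 hs
    exact h0 ((Real.sin_eq_zero_iff_of_lt_of_lt hθ.1 hθ.2).1 hs)
  have hNval : ∀ θ : ℝ, θ ≠ 0 → N θ = deriv f θ / θ := by
    intro θ h0
    rw [hN, dslope_of_ne _ h0, slope_def_field, hd0, sub_zero, sub_zero]
  have hDval : ∀ θ : ℝ, θ ≠ 0 → D θ = Real.sin θ / θ := by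
    intro θ h0
    rw [hD, dslope_of_ne _ h0, slope_def_field, Real.sin_zero, sub_zero, sub_zero]
  have hD_ne : ∀ θ ∈ Set.Ioo (-π) π, D θ ≠ 0 := by
    intro θ hθ
    rcases eq_or_ne θ 0 with rfl | h0
    · rw [hD, dslope_same, Real.deriv_sin, Real.cos_zero]; exact one_ne_zero
    · rw [hDval θ h0]; exact div_ne_zero (hsin_ne θ hθ h0) h0
  have hNe : ∀ θ : ℝ, N (-θ) = N θ := by
    intro θ
    rcases eq_or_ne θ 0 with rfl | h0
    · rw [neg_zero]
    · rw [hNval (-θ) (neg_ne_zero.2 h0), hNval θ h0, hodd, neg_div_neg_eq]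
  have hDe : ∀ θ : ℝ, D (-θ) = D θ := by
    intro θ
    rcases eq_or_ne θ 0 with rfl | h0
    · rw [neg_zero]
    · rw [hDval (-θ) (neg_ne_zero.2 h0), hDval θ h0, Real.sin_neg, neg_div_neg_eq]
  -- the derivative of `berg (n+2)` via the substitution
  have hderiv : ∀ t ∈ Set.Ioo (-1 : ℝ) 1,
      deriv (berg (n + 2)) t = deriv f (Real.arccos (-t)) / Real.sqrt (1 - t ^ 2) := by
    intro t ht
    have hmem : ∀ s ∈ Set.Ioo (-1 : ℝ) 1,
        Real.arccos (-s) ∈ Set.Ioo (-π) π ∧ Real.arccos (-s) ≠ 0 := by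
      intro s hs
      have hpos : 0 < Real.arccos (-s) := Real.arccos_pos.2 (by linarith [hs.1])
      have hlt : Real.arccos (-s) < π := by
        refine lt_of_le_of_ne (Real.arccos_le_pi _) fun hc => ?_
        have := Real.arccos_eq_pi.1 hc
        linarith [hs.2]
      exact ⟨⟨by linarith [Real.pi_pos], hlt⟩, hpos.ne'⟩
    have hcong : berg (n + 2) =ᶠ[𝓝 t] fun s => f (Real.arccos (-s)) := by
      filter_upwards [isOpen_Ioo.mem_nhds ht] with s hs
      obtain ⟨hm, hne⟩ := hmem s hs
      rw [hfb _ hm hne, Real.cos_arccos (by linarith [hs.2]) (by linarith [hs.1]), neg_neg]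
    rw [hcong.deriv_eq]
    have h1 : HasDerivAt (fun s : ℝ => Real.arccos (-s)) (1 / Real.sqrt (1 - t ^ 2)) t := by
      have h2 := (Real.hasDerivAt_arccos (x := -t)
        (by intro hc; apply ht.2.ne; linarith [neg_eq_iff_eq_neg.1 hc]) (by
          intro hc; apply ht.1.ne'; linarith [neg_eq_iff_eq_neg.1 hc])).comp t (hasDerivAt_neg t)
      convert h2 using 1
      · rfl
      · rfl
      · rfl
      rw [neg_sq]
      ring
    obtain ⟨hm, _⟩ := hmem t ht
    have h2 : HasDerivAt f (deriv f (Real.arccos (-t))) (Real.arccos (-t)) :=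
      ((hfa _ hm).differentiableAt).hasDerivAt
    have h3 := h2.comp t h1
    rw [show (fun s => f (Real.arccos (-s))) = f ∘ (fun s => Real.arccos (-s)) from rfl,
      h3.deriv, mul_one_div]
  -- the new function
  refine ⟨fun θ => (((n : ℝ) + 3) / (2 * π)) * f θ
      + (((n : ℝ) + 3) / (2 * π * ((n : ℝ) + 1))) * (-Real.cos θ) * (N θ / D θ)
      + (((n : ℝ) + 3) / (2 * π * sphereVol (n + 2))) * (-Real.cos θ), ?_, ?_, ?_⟩
  · intro θ hθ
    exact ((analyticAt_const.mul (hfa θ hθ)).add ((analyticAt_const.mul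
      ((analyticAt_rcos θ).neg)).mul ((hNa θ hθ).div (hDa θ) (hD_ne θ hθ)))).add
      (analyticAt_const.mul ((analyticAt_rcos θ).neg))
  · intro θ
    simp only [hfe, hNe, hDe, Real.cos_neg]
  · have key : ∀ θ : ℝ, 0 < θ → θ < π →
        (((n : ℝ) + 3) / (2 * π)) * f θ
          + (((n : ℝ) + 3) / (2 * π * ((n : ℝ) + 1))) * (-Real.cos θ) * (N θ / D θ)
          + (((n : ℝ) + 3) / (2 * π * sphereVol (n + 2))) * (-Real.cos θ)
          = berg (n + 4) (-Real.cos θ) := by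
      intro θ h0 hπ
      have hθm : θ ∈ Set.Ioo (-π) π := ⟨by linarith [Real.pi_pos], hπ⟩
      have ht : -Real.cos θ ∈ Set.Ioo (-1 : ℝ) 1 := neg_cos_mem hθm h0.ne'
      have harc : Real.arccos (-(-Real.cos θ)) = θ := by
        rw [neg_neg, Real.arccos_cos h0.le hπ.le]
      have hsq : Real.sqrt (1 - (-Real.cos θ) ^ 2) = Real.sin θ := by
        rw [neg_sq, show 1 - Real.cos θ ^ 2 = Real.sin θ ^ 2 by
          nlinarith [Real.sin_sq_add_cos_sq θ],
          Real.sqrt_sq (Real.sin_nonneg_of_nonneg_of_le_pi h0.le hπ.le)]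
      have hd : deriv (berg (n + 2)) (-Real.cos θ) = deriv f θ / Real.sin θ := by
        rw [hderiv _ ht, harc, hsq]
      have hb : berg (n + 2) (-Real.cos θ) = f θ := (hfb θ hθm h0.ne').symm
      have hND : N θ / D θ = deriv f θ / Real.sin θ := by
        have hs := hsin_ne θ hθm h0.ne'
        rw [hNval θ h0.ne', hDval θ h0.ne']
        field_simp
      show _ = (((n : ℝ) + 3) / (2 * π)) * berg (n + 2) (-Real.cos θ)
        + (((n : ℝ) + 3) / (2 * π * ((n : ℝ) + 1))) * (-Real.cos θ)
            * deriv (berg (n + 2)) (-Real.cos θ)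
        + (((n : ℝ) + 3) / (2 * π * sphereVol (n + 2))) * (-Real.cos θ)
      rw [hd, hb, hND]
    intro θ hθ h0
    rcases lt_or_gt_of_ne h0 with hneg | hpos
    · have hk := key (-θ) (by linarith) (by linarith [hθ.1])
      rw [hfe, hNe, hDe, Real.cos_neg] at hk
      exact hk
    · exact key θ hpos hθ.2

lemma goodAll : ∀ n : ℕ, Good (n + 2) := by
  intro n
  induction n using Nat.strong_induction_on with
  | _ n ih =>
    match n with
    | 0 => exact good2
    | 1 => exact good3
    | (m + 2) => exact good_step m (ih m (by omega))

/-- Every Berg function `g_j`, after the substitution `t = -cos θ`, extends to an even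
real-analytic function on `(-π, π)`. -/
theorem stmt_3 (j : ℕ) (hj : 2 ≤ j) :
    ∃ f : ℝ → ℝ,
      (∀ θ ∈ Set.Ioo (-π) π, AnalyticAt ℝ f θ) ∧
      (∀ θ ∈ Set.Ioo (-π) π, f (-θ) = f θ) ∧
      (∀ θ ∈ Set.Ioo (-π) π, θ ≠ 0 → f θ = berg j (-Real.cos θ)) := by
  obtain ⟨n, rfl⟩ : ∃ n, j = n + 2 := ⟨j - 2, by omega⟩
  obtain ⟨f, h1, h2, h3⟩ := goodAll n
  exact ⟨f, h1, fun θ _ => h2 θ, h3⟩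
end

section
/- Let n ≥ 3 be an integer. For sufficiently differentiable f : (−1,1) → ℝ define (□̄_m f)(t) = (1/(m−1))·(1−t²)·f''(t) − t·f'(t) + f(t) and (D_{N,i}f)(t) = (1−t²)·f''(t) − N·t·f'(t) − i(N−i−1)·f(t). Then for every four times differentiable f : (−1,1) → ℝ and all t ∈ (−1,1), (n−1)·(D_{n,n−2}(□̄_n f))(t) = (n−2)·(D_{n+1,n−1}(□̄_{n−1} f))(t). -/
open Real Set Filter Topology

/-- The second order differential operator `D_{N,i}`. -/
noncomputable def Dop (N i : ℕ) (f : ℝ → ℝ) (t : ℝ) : ℝ :=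
  (1 - t ^ 2) * deriv (deriv f) t - (N : ℝ) * t * deriv f t - (i : ℝ) * ((N : ℝ) - i - 1) * f t

/-- The box operator `□̄_m`. -/
noncomputable def boxOp (m : ℕ) (f : ℝ → ℝ) (t : ℝ) : ℝ :=
  (1 / ((m : ℝ) - 1)) * (1 - t ^ 2) * deriv (deriv f) t - t * deriv f t + f t

section aux

variable (f : ℝ → ℝ)

/-- First derivative expression of a box-type operator. -/
noncomputable def E1 (c : ℝ) (f : ℝ → ℝ) (s : ℝ) : ℝ :=
  (c * (-(2 * s))) * deriv (deriv f) s + (c * (1 - s ^ 2)) * deriv (deriv (deriv f)) s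
    - (1 * deriv f s + s * deriv (deriv f) s) + deriv f s

/-- Second derivative expression of a box-type operator. -/
noncomputable def E2 (c : ℝ) (f : ℝ → ℝ) (s : ℝ) : ℝ :=
  ((c * (-2)) * deriv (deriv f) s + (c * (-(2 * s))) * deriv (deriv (deriv f)) s)
    + ((c * (-(2 * s))) * deriv (deriv (deriv f)) s
        + (c * (1 - s ^ 2)) * deriv (deriv (deriv (deriv f))) s)
    - (1 * deriv (deriv f) s + (1 * deriv (deriv f) s + s * deriv (deriv (deriv f)) s))
    + deriv (deriv f) s

theorem aux_hasDerivAt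
    (h0 : ∀ s ∈ Set.Ioo (-1 : ℝ) 1, DifferentiableAt ℝ f s)
    (h1 : ∀ s ∈ Set.Ioo (-1 : ℝ) 1, DifferentiableAt ℝ (deriv f) s)
    (h2 : ∀ s ∈ Set.Ioo (-1 : ℝ) 1, DifferentiableAt ℝ (deriv (deriv f)) s)
    (c : ℝ) :
    ∀ s ∈ Set.Ioo (-1 : ℝ) 1,
      HasDerivAt (fun x => c * (1 - x ^ 2) * deriv (deriv f) x - x * deriv f x + f x)
        (E1 c f s) s := by
  intro s hs
  have hsq : HasDerivAt (fun x : ℝ => c * (1 - x ^ 2)) (c * (-(2 * s))) s := by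
    have h : HasDerivAt (fun x : ℝ => 1 - x ^ 2) (-(2 * s)) s := by
      simpa using (hasDerivAt_pow 2 s).const_sub 1
    simpa using h.const_mul c
  have hT1 : HasDerivAt (fun x => c * (1 - x ^ 2) * deriv (deriv f) x)
      ((c * (-(2 * s))) * deriv (deriv f) s
        + (c * (1 - s ^ 2)) * deriv (deriv (deriv f)) s) s :=
    hsq.mul (h2 s hs).hasDerivAt
  have hT2 : HasDerivAt (fun x => x * deriv f x)
      (1 * deriv f s + s * deriv (deriv f) s) s :=
    (hasDerivAt_id s).mul (h1 s hs).hasDerivAt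
  exact (hT1.sub hT2).add (h0 s hs).hasDerivAt

theorem aux_hasDerivAt2
    (h1 : ∀ s ∈ Set.Ioo (-1 : ℝ) 1, DifferentiableAt ℝ (deriv f) s)
    (h2 : ∀ s ∈ Set.Ioo (-1 : ℝ) 1, DifferentiableAt ℝ (deriv (deriv f)) s)
    (h3 : ∀ s ∈ Set.Ioo (-1 : ℝ) 1, DifferentiableAt ℝ (deriv (deriv (deriv f))) s)
    (c : ℝ) :
    ∀ s ∈ Set.Ioo (-1 : ℝ) 1, HasDerivAt (E1 c f) (E2 c f s) s := by
  intro s hs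
  have hlin : HasDerivAt (fun x : ℝ => c * (-(2 * x))) (c * (-2)) s := by
    have h : HasDerivAt (fun x : ℝ => -(2 * x)) (-2) s := by
      simpa using ((hasDerivAt_id s).const_mul 2).fun_neg
    simpa using h.const_mul c
  have hsq : HasDerivAt (fun x : ℝ => c * (1 - x ^ 2)) (c * (-(2 * s))) s := by
    have h : HasDerivAt (fun x : ℝ => 1 - x ^ 2) (-(2 * s)) s := by
      simpa using (hasDerivAt_pow 2 s).const_sub 1
    simpa using h.const_mul c
  have hT1 : HasDerivAt (fun x => (c * (-(2 * x))) * deriv (deriv f) x)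
      ((c * (-2)) * deriv (deriv f) s + (c * (-(2 * s))) * deriv (deriv (deriv f)) s) s :=
    hlin.mul (h2 s hs).hasDerivAt
  have hT2 : HasDerivAt (fun x => (c * (1 - x ^ 2)) * deriv (deriv (deriv f)) x)
      ((c * (-(2 * s))) * deriv (deriv (deriv f)) s
        + (c * (1 - s ^ 2)) * deriv (deriv (deriv (deriv f))) s) s :=
    hsq.mul (h3 s hs).hasDerivAt
  have hT3 : HasDerivAt (fun x => 1 * deriv f x + x * deriv (deriv f) x)
      (1 * deriv (deriv f) s + (1 * deriv (deriv f) s + s * deriv (deriv (deriv f)) s)) s := by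
    have ha : HasDerivAt (fun x => 1 * deriv f x) (1 * deriv (deriv f) s) s :=
      ((h1 s hs).hasDerivAt).const_mul 1
    exact ha.add ((hasDerivAt_id s).mul (h2 s hs).hasDerivAt)
  exact (((hT1.add hT2).sub hT3).add (h1 s hs).hasDerivAt)

end aux

set_option maxHeartbeats 2000000 in
/-- The identity `(n-1)·D_{n,n-2} ∘ □̄_n = (n-2)·D_{n+1,n-1} ∘ □̄_{n-1}`. -/
theorem stmt_19 (n : ℕ) (hn : 3 ≤ n) (f : ℝ → ℝ)
    (hf : ∀ k < 4, DifferentiableOn ℝ (deriv^[k] f) (Set.Ioo (-1 : ℝ) 1)) :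
    ∀ t ∈ Set.Ioo (-1 : ℝ) 1,
      ((n : ℝ) - 1) * Dop n (n - 2) (boxOp n f) t =
        ((n : ℝ) - 2) * Dop (n + 1) (n - 1) (boxOp (n - 1) f) t := by
  have e1 : deriv^[1] f = deriv f := rfl
  have e2 : deriv^[2] f = deriv (deriv f) := by
    rw [show (2 : ℕ) = 1 + 1 from rfl, Function.iterate_succ_apply', e1]
  have e3 : deriv^[3] f = deriv (deriv (deriv f)) := by
    rw [show (3 : ℕ) = 2 + 1 from rfl, Function.iterate_succ_apply', e2]
  have h0 : ∀ s ∈ Set.Ioo (-1 : ℝ) 1, DifferentiableAt ℝ f s := fun s hs =>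
    ((hf 0 (by norm_num)).differentiableAt (isOpen_Ioo.mem_nhds hs))
  have h1 : ∀ s ∈ Set.Ioo (-1 : ℝ) 1, DifferentiableAt ℝ (deriv f) s := fun s hs => by
    have := (hf 1 (by norm_num)).differentiableAt (isOpen_Ioo.mem_nhds hs); rwa [e1] at this
  have h2 : ∀ s ∈ Set.Ioo (-1 : ℝ) 1, DifferentiableAt ℝ (deriv (deriv f)) s := fun s hs => by
    have := (hf 2 (by norm_num)).differentiableAt (isOpen_Ioo.mem_nhds hs); rwa [e2] at this
  have h3 : ∀ s ∈ Set.Ioo (-1 : ℝ) 1, DifferentiableAt ℝ (deriv (deriv (deriv f))) s :=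
    fun s hs => by
    have := (hf 3 (by norm_num)).differentiableAt (isOpen_Ioo.mem_nhds hs); rwa [e3] at this
  intro t ht
  have hmem : Set.Ioo (-1 : ℝ) 1 ∈ 𝓝 t := isOpen_Ioo.mem_nhds ht
  -- derivatives of the box-type function
  have key1 : ∀ c : ℝ,
      deriv (fun x => c * (1 - x ^ 2) * deriv (deriv f) x - x * deriv f x + f x) t
        = E1 c f t := fun c => (aux_hasDerivAt f h0 h1 h2 c t ht).deriv
  have key2 : ∀ c : ℝ,
      deriv (deriv (fun x => c * (1 - x ^ 2) * deriv (deriv f) x - x * deriv f x + f x)) t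
        = E2 c f t := by
    intro c
    have heq : deriv (fun x => c * (1 - x ^ 2) * deriv (deriv f) x - x * deriv f x + f x)
        =ᶠ[𝓝 t] E1 c f :=
      Filter.eventuallyEq_of_mem hmem (fun s hs => (aux_hasDerivAt f h0 h1 h2 c s hs).deriv)
    rw [heq.deriv_eq]
    exact (aux_hasDerivAt2 f h1 h2 h3 c t ht).deriv
  have hb1 : boxOp n f = fun x =>
      (1 / ((n : ℝ) - 1)) * (1 - x ^ 2) * deriv (deriv f) x - x * deriv f x + f x := rfl
  have hb2 : boxOp (n - 1) f = fun x =>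
      (1 / (((n - 1 : ℕ) : ℝ) - 1)) * (1 - x ^ 2) * deriv (deriv f) x - x * deriv f x + f x := rfl
  simp only [Dop, hb1, hb2, key1, key2]
  have hc1 : ((n : ℝ) - 1) ≠ 0 := by
    have : (3 : ℝ) ≤ (n : ℝ) := by exact_mod_cast hn
    nlinarith
  have hc2 : ((n : ℝ) - 2) ≠ 0 := by
    have : (3 : ℝ) ≤ (n : ℝ) := by exact_mod_cast hn
    nlinarith
  have hcast1 : ((n - 1 : ℕ) : ℝ) = (n : ℝ) - 1 := by
    have : 1 ≤ n := by omega
    push_cast [this]; ring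
  have hcast2 : ((n - 2 : ℕ) : ℝ) = (n : ℝ) - 2 := by
    have : 2 ≤ n := by omega
    push_cast [this]; ring
  simp only [E1, E2, hcast1, hcast2]
  have hc1' : (-1 + (n : ℝ)) ≠ 0 := by intro h; apply hc1; linarith
  have hc2' : (-2 + (n : ℝ)) ≠ 0 := by intro h; apply hc2; linarith
  have hc2'' : ((n : ℝ) - 1 - 1) ≠ 0 := by intro h; apply hc2; linarith
  push_cast
  field_simp [hc1, hc2, hc1', hc2', hc2'']
  ring
end
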